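/- Let u ∈ G(ℝ^d) be homogeneous of degree α ∈ ℝ. Then u admits a tempered representative: there exists v ∈ G_τ(ℝ^d) such that K(v) = u; equivalently, u has a representative (ũ_ε)_ε which is a tempered moderate net. -/

import Mathlib

open Set Filter Topology MeasureTheory

noncomputable section

variable {E F : Type*} [NormedAddCommGroup E] [NormedSpace ℝ E]
  [NormedAddCommGroup F] [NormedSpace ℝ F]

/-- A net of smooth functions, indexed by `ε ∈ (0,1]`, is *moderate* on the open set `Ω`:
all iterated derivatives are `O(ε^{-N})` on compact subsets, for some `N`. -/
def IsModerate (Ω : Set E) (u : ℝ → E → F) : Prop :=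
  (∀ ε ∈ Set.Ioc (0:ℝ) 1, ContDiffOn ℝ (⊤:ℕ∞) (u ε) Ω) ∧
  ∀ K : Set E, IsCompact K → K ⊆ Ω → ∀ n : ℕ, ∃ N : ℕ, ∃ C : ℝ, ∃ ε₀ : ℝ, 0 < ε₀ ∧
    ∀ ε : ℝ, 0 < ε → ε < ε₀ → ∀ x ∈ K,
      ‖iteratedFDerivWithin ℝ n (u ε) Ω x‖ ≤ C * ε ^ (-(N:ℤ))

/-- A net of smooth functions is *negligible* on `Ω`: all iterated derivatives are `O(ε^m)`
on compact subsets, for every `m`. -/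
def IsNegligible (Ω : Set E) (u : ℝ → E → F) : Prop :=
  (∀ ε ∈ Set.Ioc (0:ℝ) 1, ContDiffOn ℝ (⊤:ℕ∞) (u ε) Ω) ∧
  ∀ K : Set E, IsCompact K → K ⊆ Ω → ∀ n : ℕ, ∀ m : ℕ, ∃ C : ℝ, ∃ ε₀ : ℝ, 0 < ε₀ ∧
    ∀ ε : ℝ, 0 < ε → ε < ε₀ → ∀ x ∈ K,
      ‖iteratedFDerivWithin ℝ n (u ε) Ω x‖ ≤ C * ε ^ m

/-- A net of numbers is *moderate*: `O(ε^{-N})` for some `N`. -/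
def NumModerate (c : ℝ → F) : Prop :=
  ∃ N : ℕ, ∃ C : ℝ, ∃ ε₀ : ℝ, 0 < ε₀ ∧ ∀ ε : ℝ, 0 < ε → ε < ε₀ → ‖c ε‖ ≤ C * ε ^ (-(N:ℤ))

/-- A net of numbers is *negligible*: `O(ε^m)` for every `m`. -/
def NumNegligible (c : ℝ → F) : Prop :=
  ∀ m : ℕ, ∃ C : ℝ, ∃ ε₀ : ℝ, 0 < ε₀ ∧ ∀ ε : ℝ, 0 < ε → ε < ε₀ → ‖c ε‖ ≤ C * ε ^ m

/-- A net of points is a representative of a *compactly supported generalized point* of `Ω`. -/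
def CompactlySupportedPoint (Ω : Set E) (a : ℝ → E) : Prop :=
  ∃ K : Set E, IsCompact K ∧ K ⊆ Ω ∧ ∃ ε₀ : ℝ, 0 < ε₀ ∧ ∀ ε : ℝ, 0 < ε → ε < ε₀ → a ε ∈ K

/-- The partial order on generalized reals, on representatives: `a ≤ b` iff `b - a` has a
representative with all terms nonnegative, i.e. `a ε + n ε ≤ b ε` for some negligible `n`. -/
def TildeLe (a b : ℝ → ℝ) : Prop :=
  ∃ n : ℝ → ℝ, NumNegligible n ∧ ∀ ε ∈ Set.Ioc (0:ℝ) 1, a ε + n ε ≤ b ε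

/-- Strict order `a << b`: `b - a` is strictly positive, i.e. `b ε - a ε > ε^m` for some `m`
and all small `ε`. -/
def TildeLt (a b : ℝ → ℝ) : Prop :=
  ∃ m : ℕ, ∃ ε₀ : ℝ, 0 < ε₀ ∧ ∀ ε : ℝ, 0 < ε → ε < ε₀ → a ε + ε ^ m < b ε

/-- A net of smooth functions on all of ℝ^d is *tempered moderate*: for each derivative
order there is `N` with a global bound `C·ε^{-N}·(1+|x|)^N`. -/
def TemperedModerate {E F : Type*} [NormedAddCommGroup E] [NormedSpace ℝ E]
    [NormedAddCommGroup F] [NormedSpace ℝ F] (v : ℝ → E → F) : Prop :=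
  (∀ ε ∈ Set.Ioc (0:ℝ) 1, ContDiff ℝ (⊤:ℕ∞) (v ε)) ∧
  ∀ n : ℕ, ∃ N : ℕ, ∃ C : ℝ, ∃ ε₀ : ℝ, 0 < ε₀ ∧ ∀ ε : ℝ, 0 < ε → ε < ε₀ →
    ∀ x : E, ‖iteratedFDeriv ℝ n (v ε) x‖ ≤ C * ε ^ (-(N:ℤ)) * (1 + ‖x‖) ^ N

/-!
With `w_ε(x) = u_ε(2x) - a u_ε(x)` the negligible scaling defect (`a = 2^α`), we have
`u_ε(x) = a u_ε(x/2) + w_ε(x/2)`. Iterating `k` times bounds the derivatives of `u_ε` on the ball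
of radius `2^k` by `λ^k (ε^{-N} + k)`, where `|a| ≤ λ = 2^q` and `ε^{-N}` bounds them on the unit
ball, as long as `w_ε` is bounded by `1` on the ball of radius `2^k`, which holds for `ε` small
depending on `k`. A diagonal choice `k = K(ε) → ∞` with `2^{K(ε)} ≤ ε⁻¹` turns this into a bound
`O(ε^{-q-N-1})` on the ball of radius `2^{K(ε)}`. Cutting `u_ε` off outside that ball gives a
globally bounded, hence tempered, net, which agrees with `u_ε` near any compact set once `ε` is
small.
-/

open Metric
open scoped ContDiff

theorem Filter.exists_tendsto_atTop_eventually_of_forall_eventually {α : Type*} {l : Filter α}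
    {B : α → ℕ} (hB : Tendsto B l atTop) {P : ℕ → α → Prop} (hP : ∀ k, ∀ᶠ a in l, P k a) :
    ∃ K : α → ℕ, Tendsto K l atTop ∧ ∀ᶠ a in l, P (K a) a := by
  classical
  have hQ : ∀ k, ∀ᶠ a in l, ∀ j ≤ k, P j a := fun k =>
    (finite_le_nat k).eventually_all.2 fun j _ => hP j
  refine ⟨fun a => Nat.findGreatest (fun k => ∀ j ≤ k, P j a) (B a), ?_, ?_⟩
  · refine tendsto_atTop.2 fun k => ?_
    filter_upwards [hB.eventually_ge_atTop k, hQ k] with a hBa hQa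
    exact Nat.le_findGreatest hBa hQa
  · filter_upwards [hP 0] with a h0
    exact Nat.findGreatest_spec (P := fun k => ∀ j ≤ k, P j a) (Nat.zero_le _)
      (fun j hj => by rwa [Nat.le_zero.1 hj]) _ le_rfl

theorem eventually_nhdsGT_zero_iff {p : ℝ → Prop} :
    (∀ᶠ ε in 𝓝[>] 0, p ε) ↔ ∃ ε₀ : ℝ, 0 < ε₀ ∧ ∀ ε, 0 < ε → ε < ε₀ → p ε :=
  (nhdsGT_basis 0).eventually_iff.trans <| by simp [and_imp]

theorem eventually_mul_le_inv_pow_succ (C : ℝ) (N : ℕ) :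
    ∀ᶠ ε in 𝓝[>] (0 : ℝ), C * ε⁻¹ ^ N ≤ ε⁻¹ ^ (N + 1) := by
  filter_upwards [tendsto_inv_nhdsGT_zero.eventually_ge_atTop C, self_mem_nhdsWithin]
    with ε hC hε
  rw [pow_succ']
  exact mul_le_mul_of_nonneg_right hC (by have := hε.out; positivity)

theorem IsModerate.contDiff {u : ℝ → E → F} (hu : IsModerate univ u) {ε : ℝ}
    (hε : ε ∈ Ioc 0 1) : ContDiff ℝ ∞ (u ε) :=
  contDiffOn_univ.1 (hu.1 ε hε)

theorem IsModerate.exists_eventually_norm_le_inv_pow {Ω : Set E} {u : ℝ → E → F}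
    (hu : IsModerate Ω u) {K : Set E} (hK : IsCompact K) (hKΩ : K ⊆ Ω) (n : ℕ) :
    ∃ N : ℕ, ∀ᶠ ε in 𝓝[>] 0, ∀ i ≤ n, ∀ x ∈ K,
      ‖iteratedFDerivWithin ℝ i (u ε) Ω x‖ ≤ ε⁻¹ ^ N := by
  have h : ∀ i, ∃ N : ℕ, ∀ᶠ ε in 𝓝[>] 0, ∀ x ∈ K,
      ‖iteratedFDerivWithin ℝ i (u ε) Ω x‖ ≤ ε⁻¹ ^ N := by
    intro i
    obtain ⟨N, C, ε₀, hε₀, hb⟩ := hu.2 K hK hKΩ i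
    refine ⟨N + 1, ?_⟩
    filter_upwards [eventually_nhdsGT_zero_iff.2 ⟨ε₀, hε₀, hb⟩,
      eventually_mul_le_inv_pow_succ C N] with ε hb hC x hx
    rw [inv_pow, ← zpow_natCast, ← zpow_neg] at hC
    exact (hb x hx).trans hC
  choose N hN using h
  refine ⟨(Finset.range (n + 1)).sup N, ?_⟩
  filter_upwards [(finite_le_nat n).eventually_all.2 fun i _ => hN i, Ioc_mem_nhdsGT one_pos]
    with ε hb hε i hi x hx
  exact (hb i hi x hx).trans <| pow_le_pow_right₀ ((one_le_inv₀ hε.1).2 hε.2) <|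
    Finset.le_sup (Finset.mem_range_succ_iff.2 hi)

theorem IsNegligible.eventually_norm_le_one {Ω : Set E} {w : ℝ → E → F}
    (hw : IsNegligible Ω w) {K : Set E} (hK : IsCompact K) (hKΩ : K ⊆ Ω) (n : ℕ) :
    ∀ᶠ ε in 𝓝[>] 0, ∀ x ∈ K, ‖iteratedFDerivWithin ℝ n (w ε) Ω x‖ ≤ 1 := by
  obtain ⟨C, ε₀, hε₀, hb⟩ := hw.2 K hK hKΩ n 1
  filter_upwards [eventually_nhdsGT_zero_iff.2 ⟨ε₀, hε₀, hb⟩,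
    tendsto_inv_nhdsGT_zero.eventually_ge_atTop C, self_mem_nhdsWithin] with ε hb hC hε x hx
  calc _ ≤ C * ε ^ 1 := hb x hx
    _ ≤ ε⁻¹ * ε := by rw [pow_one]; exact mul_le_mul_of_nonneg_right hC (le_of_lt hε)
    _ = 1 := inv_mul_cancel₀ (ne_of_gt hε)

theorem norm_iteratedFDeriv_comp_const_smul_le {f : E → F} {n : ℕ} (hf : ContDiff ℝ n f)
    {c : ℝ} (hc : |c| ≤ 1) (x : E) :
    ‖iteratedFDeriv ℝ n (fun y => f (c • y)) x‖ ≤ ‖iteratedFDeriv ℝ n f (c • x)‖ := by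
  rw [iteratedFDeriv_comp_const_smul c hf, norm_smul, norm_pow, Real.norm_eq_abs]
  exact mul_le_of_le_one_left (norm_nonneg _) (pow_le_one₀ (abs_nonneg c) hc)

theorem norm_iteratedFDeriv_le_of_scaling_defect {f : E → F} {n : ℕ} (hf : ContDiff ℝ n f)
    {t a lam M B : ℝ} (ht : 1 ≤ t) (ha : |a| ≤ lam) (hlam : 1 ≤ lam)
    (hbase : ∀ x : E, ‖x‖ ≤ 1 → ‖iteratedFDeriv ℝ n f x‖ ≤ M) (j : ℕ)
    (hdefect : ∀ x : E, ‖x‖ ≤ t ^ j →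
      ‖iteratedFDeriv ℝ n (fun y => f (t • y) - a • f y) x‖ ≤ B) (x : E) (hx : ‖x‖ ≤ t ^ j) :
    ‖iteratedFDeriv ℝ n f x‖ ≤ lam ^ j * (M + j * B) := by
  induction j generalizing x with
  | zero => simpa using hbase x (by simpa using hx)
  | succ j ih =>
    set g := fun y => f (t • y) - a • f y
    have ht0 : 0 < t := one_pos.trans_le ht
    have htinv : |t⁻¹| ≤ 1 := by rw [abs_inv, abs_of_pos ht0]; exact inv_le_one_of_one_le₀ ht
    have hg : ContDiff ℝ n g := (hf.comp (contDiff_const_smul t)).sub (hf.const_smul a)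
    have hB : 0 ≤ B := (norm_nonneg _).trans (hdefect 0 (by rw [norm_zero]; positivity))
    have hy : ‖t⁻¹ • x‖ ≤ t ^ j := by
      rw [norm_smul, Real.norm_eq_abs, abs_inv, abs_of_pos ht0, inv_mul_le_iff₀ ht0, ← pow_succ']
      exact hx
    have hball : ∀ y : E, ‖y‖ ≤ t ^ j → ‖y‖ ≤ t ^ (j + 1) :=
      fun y hy => hy.trans (pow_le_pow_right₀ ht j.le_succ)
    have hf_y : ‖iteratedFDeriv ℝ n f (t⁻¹ • x)‖ ≤ lam ^ j * (M + j * B) :=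
      ih (fun y hy => hdefect y (hball y hy)) _ hy
    have hg_y : ‖iteratedFDeriv ℝ n g (t⁻¹ • x)‖ ≤ B := hdefect _ (hball _ hy)
    have hsplit : iteratedFDeriv ℝ n f x = a • iteratedFDeriv ℝ n (fun z => f (t⁻¹ • z)) x +
        iteratedFDeriv ℝ n (fun z => g (t⁻¹ • z)) x := by
      have hf' : ContDiffAt ℝ n (fun z => f (t⁻¹ • z)) x :=
        (hf.comp (contDiff_const_smul t⁻¹)).contDiffAt
      have hg' : ContDiffAt ℝ n (fun z => g (t⁻¹ • z)) x :=
        (hg.comp (contDiff_const_smul t⁻¹)).contDiffAt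
      rw [← iteratedFDeriv_const_smul_apply' hf',
        ← fun_iteratedFDeriv_add_apply (hf'.const_smul a) hg']
      congr 1; ext z; simp [g, smul_smul, ht0.ne']
    calc ‖iteratedFDeriv ℝ n f x‖
        ≤ |a| * ‖iteratedFDeriv ℝ n f (t⁻¹ • x)‖ + ‖iteratedFDeriv ℝ n g (t⁻¹ • x)‖ := by
          rw [hsplit]
          refine (norm_add_le _ _).trans (add_le_add ?_ ?_)
          · rw [norm_smul, Real.norm_eq_abs]
            exact mul_le_mul_of_nonneg_left
              (norm_iteratedFDeriv_comp_const_smul_le hf htinv x) (abs_nonneg a)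
          · exact norm_iteratedFDeriv_comp_const_smul_le hg htinv x
      _ ≤ lam * (lam ^ j * (M + j * B)) + B := by gcongr
      _ ≤ lam ^ (j + 1) * (M + (j + 1 : ℕ) * B) := by
          have : B ≤ lam ^ (j + 1) * B := le_mul_of_one_le_left hB (one_le_pow₀ hlam)
          rw [pow_succ'] at this ⊢
          push_cast
          linarith

theorem exists_norm_iteratedFDeriv_cutoff_smul_le {χ : E → ℝ} {n : ℕ} (hχ : ContDiff ℝ n χ)
    (hχc : HasCompactSupport χ) {R : ℝ} (hχR : Function.support χ ⊆ closedBall 0 R) :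
    ∃ C : ℝ, ∀ s : ℝ, 1 ≤ s → ∀ f : E → F, ContDiff ℝ n f → ∀ M : ℝ, 0 ≤ M →
      (∀ i ≤ n, ∀ x : E, ‖x‖ ≤ s * R → ‖iteratedFDeriv ℝ i f x‖ ≤ M) →
      ∀ x : E, ‖iteratedFDeriv ℝ n (fun y => χ (s⁻¹ • y) • f y) x‖ ≤ C * M := by
  have hbound : ∀ i ∈ Finset.range (n + 1), ∃ C : ℝ, 0 ≤ C ∧
      ∀ z : E, ‖iteratedFDeriv ℝ i χ z‖ ≤ C := by
    intro i hi
    have hin : (i : WithTop ℕ∞) ≤ n := by exact_mod_cast Finset.mem_range_succ_iff.1 hi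
    obtain ⟨C, hC⟩ := (hχ.continuous_iteratedFDeriv hin).bounded_above_of_compact_support
      (hχc.iteratedFDeriv i)
    exact ⟨C, (norm_nonneg _).trans (hC 0), hC⟩
  choose! Cχ hCχ0 hCχ using hbound
  refine ⟨∑ i ∈ Finset.range (n + 1), (n.choose i : ℝ) * Cχ i,
    fun s hs f hf M hM hfM x => ?_⟩
  have hs0 : 0 < s := one_pos.trans_le hs
  have hsinv : |s⁻¹| ≤ 1 := by rw [abs_inv, abs_of_pos hs0]; exact inv_le_one_of_one_le₀ hs
  by_cases hx : ‖x‖ ≤ s * R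
  · have hχs : ContDiff ℝ n fun y => χ (s⁻¹ • y) := hχ.comp (contDiff_const_smul s⁻¹)
    refine (norm_iteratedFDeriv_smul_le hχs hf x le_rfl).trans ?_
    rw [Finset.sum_mul]
    refine Finset.sum_le_sum fun i hi => ?_
    have hin : i ≤ n := Finset.mem_range_succ_iff.1 hi
    have hχi : ‖iteratedFDeriv ℝ i (fun y => χ (s⁻¹ • y)) x‖ ≤ Cχ i :=
      (norm_iteratedFDeriv_comp_const_smul_le (hχ.of_le (by exact_mod_cast hin)) hsinv x).trans
        (hCχ i hi _)
    have hfi := hfM (n - i) (Nat.sub_le n i) x hx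
    have := hCχ0 i hi
    calc _ ≤ (n.choose i : ℝ) * Cχ i * M := by gcongr
      _ = _ := by ring
  · have hzero : (fun y => χ (s⁻¹ • y) • f y) =ᶠ[𝓝 x] 0 := by
      filter_upwards [isOpen_lt continuous_const continuous_norm |>.mem_nhds (not_le.1 hx)]
        with y hy
      have : s⁻¹ • y ∉ Function.support χ := fun h => by
        have := mem_closedBall_zero_iff.1 (hχR h)
        rw [norm_smul, Real.norm_eq_abs, abs_inv, abs_of_pos hs0, inv_mul_le_iff₀ hs0] at this
        exact (not_le.2 hy) this
      simp [Function.notMem_support.1 this]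
    rw [(hzero.iteratedFDeriv ℝ n).eq_of_nhds, iteratedFDeriv_zero, Pi.zero_apply, norm_zero]
    exact mul_nonneg (Finset.sum_nonneg fun i hi => mul_nonneg (Nat.cast_nonneg _) (hCχ0 i hi)) hM

section ScalingDefect

variable {u : ℝ → E → F} {a : ℝ} {K : ℝ → ℕ}

theorem IsModerate.exists_eventually_norm_le_on_ball_two_pow [ProperSpace E]
    (hu : IsModerate univ u) (hK_top : Tendsto K (𝓝[>] 0) atTop)
    (hK : ∀ᶠ ε in 𝓝[>] 0, (2 : ℝ) ^ K ε ≤ ε⁻¹ ∧ ∀ i ≤ K ε, ∀ x : E, ‖x‖ ≤ 2 ^ K ε →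
      ‖iteratedFDeriv ℝ i (fun y => u ε ((2 : ℝ) • y) - a • u ε y) x‖ ≤ 1) (n : ℕ) :
    ∃ N : ℕ, ∀ᶠ ε in 𝓝[>] 0, ∀ i ≤ n, ∀ x : E, ‖x‖ ≤ 2 ^ K ε →
      ‖iteratedFDeriv ℝ i (u ε) x‖ ≤ 2 * ε⁻¹ ^ N := by
  obtain ⟨q, hq⟩ := pow_unbounded_of_one_lt |a| one_lt_two
  obtain ⟨N, hN⟩ :=
    hu.exists_eventually_norm_le_inv_pow (isCompact_closedBall (0 : E) 1) (subset_univ _) n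
  refine ⟨q + N + 1, ?_⟩
  filter_upwards [hN, hK, hK_top.eventually_ge_atTop n, Ioc_mem_nhdsGT one_pos]
    with ε hbase ⟨hKε, hdefect⟩ hnK hε i hi x hx
  have hε0 : 0 < ε⁻¹ := inv_pos.2 hε.1
  have hε1 : 1 ≤ ε⁻¹ := (one_le_inv₀ hε.1).2 hε.2
  have hKle : (K ε : ℝ) ≤ ε⁻¹ := le_trans (by exact_mod_cast (Nat.lt_two_pow_self).le) hKε
  calc ‖iteratedFDeriv ℝ i (u ε) x‖ ≤ ((2 : ℝ) ^ q) ^ K ε * (ε⁻¹ ^ N + K ε * 1) :=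
        norm_iteratedFDeriv_le_of_scaling_defect ((hu.contDiff hε).of_le (by exact_mod_cast le_top))
          one_le_two hq.le (one_le_pow₀ one_le_two)
          (fun y hy => by simpa [iteratedFDerivWithin_univ] using hbase i hi y (by simpa using hy))
          (K ε) (hdefect i (hi.trans hnK)) x hx
    _ ≤ ε⁻¹ ^ q * (ε⁻¹ ^ N * ε⁻¹ + ε⁻¹ ^ N * ε⁻¹) := by
        rw [← pow_mul, mul_comm q, pow_mul, mul_one]
        refine mul_le_mul (pow_le_pow_left₀ (by positivity) hKε q) (add_le_add ?_ ?_)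
          (by positivity) (by positivity)
        · exact le_mul_of_one_le_right (by positivity) hε1
        · exact hKle.trans (le_mul_of_one_le_left hε0.le (one_le_pow₀ hε1))
    _ = 2 * ε⁻¹ ^ (q + N + 1) := by ring

theorem IsModerate.temperedModerate_cutoff [ProperSpace E] (hu : IsModerate univ u)
    (hK_top : Tendsto K (𝓝[>] 0) atTop)
    (hK : ∀ᶠ ε in 𝓝[>] 0, (2 : ℝ) ^ K ε ≤ ε⁻¹ ∧ ∀ i ≤ K ε, ∀ x : E, ‖x‖ ≤ 2 ^ K ε →
      ‖iteratedFDeriv ℝ i (fun y => u ε ((2 : ℝ) • y) - a • u ε y) x‖ ≤ 1)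
    {χ : E → ℝ} (hχ : ContDiff ℝ ∞ χ) (hχc : HasCompactSupport χ)
    (hχ1 : Function.support χ ⊆ closedBall 0 1) :
    TemperedModerate fun ε x => χ (((2 : ℝ) ^ K ε)⁻¹ • x) • u ε x := by
  refine ⟨fun ε hε => (hχ.comp (contDiff_const_smul _)).smul (hu.contDiff hε), fun n => ?_⟩
  obtain ⟨C, hC⟩ := exists_norm_iteratedFDeriv_cutoff_smul_le (F := F)
    (hχ.of_le (by exact_mod_cast le_top) : ContDiff ℝ n χ) hχc hχ1
  obtain ⟨N, hN⟩ := hu.exists_eventually_norm_le_on_ball_two_pow hK_top hK n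
  have hbound : ∀ᶠ ε in 𝓝[>] 0, ∀ x : E,
      ‖iteratedFDeriv ℝ n (fun y => χ (((2 : ℝ) ^ K ε)⁻¹ • y) • u ε y) x‖ ≤ ε⁻¹ ^ (N + 1) := by
    filter_upwards [hN, eventually_mul_le_inv_pow_succ (C * 2) N, Ioc_mem_nhdsGT one_pos]
      with ε hNε hCε hε
    have hε0 := hε.1
    exact fun x => (hC (2 ^ K ε) (one_le_pow₀ one_le_two) (u ε)
      ((hu.contDiff hε).of_le (by exact_mod_cast le_top)) _ (by positivity)
      (fun i hi y hy => hNε i hi y (by simpa using hy)) x).trans (by rwa [← mul_assoc])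
  obtain ⟨ε₀, hε₀, hbound⟩ := eventually_nhdsGT_zero_iff.1 hbound
  refine ⟨N + 1, 1, ε₀, hε₀, fun ε hε hεε₀ x => ?_⟩
  calc _ ≤ ε⁻¹ ^ (N + 1) := hbound ε hε hεε₀ x
    _ = 1 * ε ^ (-((N + 1 : ℕ) : ℤ)) * 1 := by rw [zpow_neg, zpow_natCast, inv_pow]; ring
    _ ≤ 1 * ε ^ (-((N + 1 : ℕ) : ℤ)) * (1 + ‖x‖) ^ (N + 1) := by
        gcongr
        exact one_le_pow₀ (le_add_of_nonneg_right (norm_nonneg x))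

theorem IsModerate.isNegligible_sub_cutoff (hu : IsModerate univ u)
    (hK_top : Tendsto K (𝓝[>] 0) atTop) {χ : E → ℝ} (hχ : ContDiff ℝ ∞ χ)
    (hχ0 : χ =ᶠ[𝓝 0] 1) :
    IsNegligible univ fun ε x => u ε x - χ (((2 : ℝ) ^ K ε)⁻¹ • x) • u ε x := by
  refine ⟨fun ε hε => contDiffOn_univ.2 <|
    (hu.contDiff hε).sub ((hχ.comp (contDiff_const_smul _)).smul (hu.contDiff hε)),
    fun Q hQ _ n m => ⟨0, ?_⟩⟩
  obtain ⟨r, hr, hχr⟩ := Metric.eventually_nhds_iff_ball.1 hχ0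
  obtain ⟨R, hQR⟩ := hQ.isBounded.subset_closedBall 0
  obtain ⟨ε₀, hε₀, hlarge⟩ := eventually_nhdsGT_zero_iff.1 <|
    ((tendsto_pow_atTop_atTop_of_one_lt one_lt_two).comp hK_top).atTop_mul_const hr
      |>.eventually_gt_atTop R
  refine ⟨ε₀, hε₀, fun ε hε hεε₀ x hx => ?_⟩
  have hs0 : (0 : ℝ) < 2 ^ K ε := by positivity
  have hzero : (fun y => u ε y - χ (((2 : ℝ) ^ K ε)⁻¹ • y) • u ε y) =ᶠ[𝓝 x] 0 := by
    have hxr : x ∈ ball (0 : E) (2 ^ K ε * r) :=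
      mem_ball_zero_iff.2 ((mem_closedBall_zero_iff.1 (hQR hx)).trans_lt (hlarge ε hε hεε₀))
    filter_upwards [isOpen_ball.mem_nhds hxr] with y hy
    have : ((2 : ℝ) ^ K ε)⁻¹ • y ∈ ball (0 : E) r := by
      rw [mem_ball_zero_iff, norm_smul, Real.norm_eq_abs, abs_inv, abs_of_pos hs0,
        inv_mul_lt_iff₀ hs0]
      exact mem_ball_zero_iff.1 hy
    simp [hχr _ this]
  rw [iteratedFDerivWithin_univ, (hzero.iteratedFDeriv ℝ n).eq_of_nhds, iteratedFDeriv_zero]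
  simp

end ScalingDefect

theorem IsModerate.exists_temperedModerate_sub_isNegligible [FiniteDimensional ℝ E]
    {u : ℝ → E → F} (hu : IsModerate univ u) {a : ℝ}
    (hhom : IsNegligible univ fun ε x => u ε ((2 : ℝ) • x) - a • u ε x) :
    ∃ v : ℝ → E → F, TemperedModerate v ∧ IsNegligible univ fun ε x => u ε x - v ε x := by
  obtain ⟨K, hK_top, hK⟩ := exists_tendsto_atTop_eventually_of_forall_eventually
    (tendsto_nat_floor_atTop.comp tendsto_inv_nhdsGT_zero)
    (P := fun k ε => (2 : ℝ) ^ k ≤ ε⁻¹ ∧ ∀ i ≤ k, ∀ x : E, ‖x‖ ≤ 2 ^ k →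
      ‖iteratedFDeriv ℝ i (fun y => u ε ((2 : ℝ) • y) - a • u ε y) x‖ ≤ 1)
    fun k => (tendsto_inv_nhdsGT_zero.eventually_ge_atTop _).and <|
      (finite_le_nat k).eventually_all.2 fun i _ => by
        simpa [iteratedFDerivWithin_univ] using
          hhom.eventually_norm_le_one (isCompact_closedBall 0 (2 ^ k)) (subset_univ _) i
  let χ : ContDiffBump (0 : E) := ⟨1 / 2, 1, by norm_num, by norm_num⟩
  exact ⟨_, hu.temperedModerate_cutoff hK_top hK χ.contDiff χ.hasCompactSupport
    (χ.support_eq.trans_subset ball_subset_closedBall),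
    hu.isNegligible_sub_cutoff hK_top χ.contDiff χ.eventuallyEq_one⟩

/-- a generalized function on ℝ^d homogeneous of degree `α` has a tempered
representative. -/
theorem statement_7
    (d : ℕ) (α : ℝ) (u : ℝ → EuclideanSpace ℝ (Fin d) → ℂ)
    (hu : IsModerate (Set.univ : Set (EuclideanSpace ℝ (Fin d))) u)
    (hhom : ∀ lam : ℝ, 0 < lam →
      IsNegligible (Set.univ : Set (EuclideanSpace ℝ (Fin d)))
        (fun ε x => u ε (lam • x) - ((lam ^ α : ℝ) : ℂ) * u ε x)) :
    ∃ v : ℝ → EuclideanSpace ℝ (Fin d) → ℂ, TemperedModerate v ∧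
      IsNegligible (Set.univ : Set (EuclideanSpace ℝ (Fin d)))
        (fun ε x => u ε x - v ε x) := by
  refine hu.exists_temperedModerate_sub_isNegligible (a := 2 ^ α) ?_
  simpa only [Complex.real_smul] using hhom 2 two_pos
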